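/- arXiv:1402.3138 — 5 statements merged into one kernel-verified Lean document; each statement's English description precedes it below -/
import Mathlib

section
/- Suppose P is a nonnegative substochastic matrix (each row sums to at most 1) indexed by a finite agent set A, and define Q = {i ∈ A : Σ_j q_{ij} > 0} where Σ_{k} p_{ik} + Σ_j q_{ij} = 1 for each i, with all q_{ij} ≥ 0. If Q is nonempty and from every agent i ∉ Q there is a path i = a_1, a_2, ..., a_{n+1} with a_{n+1} ∈ Q and p_{a_k a_{k+1}} > 0 for each k, then the spectral radius of P is strictly less than 1. -/
open scoped Matrix

attribute [local instance] Matrix.linftyOpNormedRing Matrix.linftyOpNormedAlgebra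

/-- Collective decisiveness implies spectral radius of `P` strictly
less than 1.  `A = Fin n` are agents, `C = Fin m` choices, rows of `(P, q)` sum
to 1, all entries nonnegative, zero diagonal; `Q = {i : Σ_j q i j > 0}` is
nonempty and every agent has a path of positive `P`-entries leading into `Q`. -/
theorem collective_decisiveness_spectral_radius_lt_one {n m : ℕ}
    (P : Matrix (Fin n) (Fin n) ℝ) (q : Fin n → Fin m → ℝ)
    (hP : ∀ i k, 0 ≤ P i k) (hq : ∀ i j, 0 ≤ q i j)
    (hdiag : ∀ i, P i i = 0)
    (hrow : ∀ i, (∑ k, P i k) + (∑ j, q i j) = 1)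
    (hQ : ∃ i, 0 < ∑ j, q i j)
    (hpath : ∀ i, ∃ k, (0 < ∑ j, q k j) ∧
      Relation.ReflTransGen (fun a b => 0 < P a b) i k) :
    ∀ μ ∈ spectrum ℂ (P.map (algebraMap ℝ ℂ)), ‖μ‖ < 1 := by
  classical
  obtain ⟨i₀, hi₀⟩ := hQ
  have hne : Nonempty (Fin n) := ⟨i₀⟩
  have hsum_le : ∀ i, ∑ k, P i k ≤ 1 := by
    intro i
    have h1 := hrow i
    have h2 : 0 ≤ ∑ j, q i j := Finset.sum_nonneg fun j _ => hq i j
    linarith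
  have hpow : ∀ N, ∀ i k, 0 ≤ (P ^ N) i k := by
    intro N
    induction N with
    | zero =>
      intro i k
      rw [pow_zero, Matrix.one_apply]
      split <;> norm_num
    | succ N ih =>
      intro i k
      rw [pow_succ, Matrix.mul_apply]
      exact Finset.sum_nonneg fun j _ => mul_nonneg (ih i j) (hP j k)
  set s : ℕ → Fin n → ℝ := fun N i => ∑ k, (P ^ N) i k with hs
  have hs1 : ∀ i, s 1 i = ∑ k, P i k := by intro i; simp [hs]
  have hrec : ∀ N i, s (N + 1) i = ∑ k, P i k * s N k := by
    intro N i
    simp only [hs]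
    rw [pow_succ']
    simp_rw [Matrix.mul_apply]
    rw [Finset.sum_comm]
    simp [Finset.mul_sum]
  have hrec' : ∀ N i, s (N + 1) i = ∑ k, (P ^ N) i k * s 1 k := by
    intro N i
    simp only [hs]
    rw [pow_succ]
    simp_rw [Matrix.mul_apply]
    rw [Finset.sum_comm]
    simp [Finset.mul_sum, pow_one]
  have hle1 : ∀ N i, s N i ≤ 1 := by
    intro N
    induction N with
    | zero => intro i; simp [hs, Matrix.one_apply]
    | succ N ih =>
      intro i
      rw [hrec]
      calc ∑ k, P i k * s N k ≤ ∑ k, P i k * 1 :=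
            Finset.sum_le_sum fun k _ => mul_le_mul_of_nonneg_left (ih k) (hP i k)
        _ = ∑ k, P i k := by simp
        _ ≤ 1 := hsum_le i
  have hmono : ∀ N i, s (N + 1) i ≤ s N i := by
    intro N i
    rw [hrec']
    calc ∑ k, (P ^ N) i k * s 1 k ≤ ∑ k, (P ^ N) i k * 1 :=
          Finset.sum_le_sum fun k _ => mul_le_mul_of_nonneg_left
            ((hs1 k) ▸ hsum_le k) (hpow N i k)
      _ = s N i := by simp [hs]
  have hanti : ∀ i, ∀ N M, N ≤ M → s M i ≤ s N i := by
    intro i N M hNM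
    induction M, hNM using Nat.le_induction with
    | base => exact le_rfl
    | succ M hNM ih => exact le_trans (hmono M i) ih
  have hkey : ∀ i, ∃ N, s N i < 1 := by
    intro i
    obtain ⟨k, hk, hpathik⟩ := hpath i
    induction hpathik using Relation.ReflTransGen.head_induction_on with
    | refl =>
      refine ⟨1, ?_⟩
      rw [hs1]
      have := hrow k
      linarith
    | @head a b hab htail ih =>
      obtain ⟨N, hN⟩ := ih
      refine ⟨N + 1, ?_⟩
      rw [hrec]
      have hlt : ∑ j, P a j * s N j < ∑ j, P a j := by
        refine Finset.sum_lt_sum (fun j _ => ?_) ⟨b, Finset.mem_univ b, ?_⟩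
        · calc P a j * s N j ≤ P a j * 1 :=
              mul_le_mul_of_nonneg_left (hle1 N j) (hP a j)
            _ = P a j := mul_one _
        · calc P a b * s N b < P a b * 1 := mul_lt_mul_of_pos_left hN hab
            _ = P a b := mul_one _
      exact lt_of_lt_of_le hlt (hsum_le a)
  choose f hf using hkey
  set N : ℕ := Finset.univ.sup f + 1 with hN
  have hNall : ∀ i, s N i < 1 := fun i =>
    lt_of_le_of_lt (hanti i (f i) N
      (le_trans (Finset.le_sup (Finset.mem_univ i)) (Nat.le_succ _))) (hf i)
  -- norm of M^N
  set M : Matrix (Fin n) (Fin n) ℂ := P.map (algebraMap ℝ ℂ) with hM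
  have hMpow : M ^ N = (P ^ N).map (algebraMap ℝ ℂ) := by
    have : M = (algebraMap ℝ ℂ).mapMatrix P := rfl
    rw [this, ← map_pow]
    rfl
  have hnorm : ‖M ^ N‖ < 1 := by
    rw [hMpow, Matrix.linfty_opNorm_def]
    rw [show (1 : ℝ) = ((1 : NNReal) : ℝ) by norm_num, NNReal.coe_lt_coe]
    refine Finset.sup_lt_iff (by norm_num) |>.2 fun i _ => ?_
    rw [← NNReal.coe_lt_coe]
    push_cast
    have : ∀ j, ‖((P ^ N).map (algebraMap ℝ ℂ)) i j‖ = (P ^ N) i j := by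
      intro j
      simp [Matrix.map_apply, Complex.norm_real, abs_of_nonneg (hpow N i j)]
    calc (∑ j, ((‖((P ^ N).map (algebraMap ℝ ℂ)) i j‖₊ : ℝ)))
        = ∑ j, (P ^ N) i j := by
          refine Finset.sum_congr rfl fun j _ => ?_
          rw [coe_nnnorm, this j]
      _ < 1 := hNall i
  intro μ hμ
  have hμN : μ ^ N ∈ spectrum ℂ (M ^ N) := by
    have h1 := spectrum.subset_polynomial_aeval M (Polynomial.X ^ N : Polynomial ℂ)
      ⟨μ, hμ, rfl⟩
    simpa using h1
  have hle : ‖μ ^ N‖ ≤ ‖M ^ N‖ := spectrum.norm_le_norm_of_mem hμN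
  have hμNlt : ‖μ‖ ^ N < 1 := by
    rw [← norm_pow]; exact lt_of_le_of_lt hle hnorm
  by_contra hcon
  push_neg at hcon
  have : (1 : ℝ) ≤ ‖μ‖ ^ N := one_le_pow₀ hcon
  linarith
end

section
/- Suppose P is a nonnegative matrix whose row sums are at most 1, indexed by finite set A, with row-deficits q̄_i = 1 - Σ_k p_{ik}. If the set Q = {i : q̄_i > 0} is empty, or there exists a nonempty set Y of agents with no path of positive entries of P from Y into Q, then P has 1 as an eigenvalue (in particular its spectral radius equals 1). -/
open Matrix Classical in
lemma aux_closed_stochastic_eigen {n : ℕ} (P : Matrix (Fin n) (Fin n) ℝ)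
    (Z : Finset (Fin n)) (hZ : Z.Nonempty)
    (hsum : ∀ z ∈ Z, ∑ k, P z k = 1)
    (hzero : ∀ z ∈ Z, ∀ k, k ∉ Z → P z k = 0) :
    ∃ v : Fin n → ℝ, v ≠ 0 ∧ Matrix.vecMul v P = v := by
  haveI : Nonempty {x // x ∈ Z} := ⟨⟨hZ.choose, hZ.choose_spec⟩⟩
  set M : Matrix Z Z ℝ := fun i j => P i j with hM
  have hMrow : ∀ i : Z, ∑ j : Z, M i j = 1 := by
    intro i
    have h1 : ∑ j : Z, M i j = ∑ j ∈ Z, P i.1 j :=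
      Finset.sum_coe_sort Z (fun j => P i.1 j)
    have h2 : ∑ j ∈ Z, P i.1 j = ∑ j, P i.1 j :=
      Finset.sum_subset Z.subset_univ (fun x _ hx => hzero i.1 i.2 x hx)
    rw [h1, h2, hsum i.1 i.2]
  have h1v : (M - 1) *ᵥ (fun _ => (1 : ℝ)) = 0 := by
    funext i
    simp only [Matrix.mulVec, dotProduct, Matrix.sub_apply, Matrix.one_apply,
      mul_one, Pi.zero_apply]
    rw [Finset.sum_sub_distrib, hMrow i]
    simp
  have hdet : (M - 1).det = 0 := by
    rw [← Matrix.exists_mulVec_eq_zero_iff]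
    refine ⟨fun _ => 1, ?_, h1v⟩
    intro h
    have := congrFun h (Classical.arbitrary Z)
    simp at this
  have hdetT : ((M - 1)ᵀ).det = 0 := by rw [Matrix.det_transpose]; exact hdet
  obtain ⟨w, hw0, hw⟩ := Matrix.exists_mulVec_eq_zero_iff.mpr hdetT
  have key : ∀ j : Z, ∑ i : Z, w i * M i j = w j := by
    intro j
    have hj := congrFun hw j
    simp only [Matrix.mulVec, dotProduct, Matrix.transpose_apply, Matrix.sub_apply,
      Matrix.one_apply, sub_mul, Pi.zero_apply, Finset.sum_sub_distrib] at hj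
    have hsum2 : ∑ i : Z, (if i = j then (1:ℝ) else 0) * w i = w j := by
      simp [ite_mul]
    rw [hsum2] at hj
    have : ∑ i : Z, M i j * w i = w j := by linarith
    calc ∑ i : Z, w i * M i j = ∑ i : Z, M i j * w i := by
          exact Finset.sum_congr rfl (fun i _ => mul_comm _ _)
      _ = w j := this
  refine ⟨fun i => if h : i ∈ Z then w ⟨i, h⟩ else 0, ?_, ?_⟩
  · intro h
    apply hw0
    funext i
    have := congrFun h i.1
    simpa [i.2] using this
  · funext k
    have hsplit : Matrix.vecMul (fun i => if h : i ∈ Z then w ⟨i, h⟩ else 0) P k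
        = ∑ i : Z, w i * P i.1 k := by
      simp only [Matrix.vecMul, dotProduct]
      rw [show (∑ x, (if h : x ∈ Z then w ⟨x, h⟩ else 0) * P x k)
          = ∑ x ∈ Z, (if h : x ∈ Z then w ⟨x, h⟩ else 0) * P x k from
        (Finset.sum_subset Z.subset_univ (by intro x _ hx; simp [hx])).symm]
      rw [← Finset.sum_coe_sort Z (fun x => (if h : x ∈ Z then w ⟨x, h⟩ else 0) * P x k)]
      exact Finset.sum_congr rfl (fun i _ => by simp [i.2])
    rw [hsplit]
    by_cases hk : k ∈ Z
    · rw [dif_pos hk]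
      exact key ⟨k, hk⟩
    · rw [dif_neg hk]
      exact Finset.sum_eq_zero (fun i _ => by rw [hzero i.1 i.2 k hk, mul_zero])

/-- If collective decisiveness fails — either no agent is decisive
(`Q = ∅`) or there is a nonempty set `Y` of agents from which no path of
positive entries of `P` reaches a decisive agent — then `1` is an eigenvalue of
`P` (witnessed by a left eigenvector). -/
theorem failure_of_decisiveness_eigenvalue_one {n : ℕ}
    (P : Matrix (Fin n) (Fin n) ℝ)
    (hP : ∀ i k, 0 ≤ P i k)
    (hrow : ∀ i, (∑ k, P i k) ≤ 1)
    (hn : 0 < n)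
    (hfail : (∀ i, ¬ (0 < 1 - ∑ k, P i k)) ∨
      ∃ Y : Finset (Fin n), Y.Nonempty ∧
        ∀ y ∈ Y, ∀ k, Relation.ReflTransGen (fun a b => 0 < P a b) y k →
          ¬ (0 < 1 - ∑ s, P k s)) :
    ∃ v : Fin n → ℝ, v ≠ 0 ∧ Matrix.vecMul v P = v := by
  classical
  rcases hfail with h | ⟨Y, hYne, hY⟩
  · apply aux_closed_stochastic_eigen P Finset.univ
    · haveI : Nonempty (Fin n) := ⟨⟨0, hn⟩⟩
      exact Finset.univ_nonempty
    · intro z _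
      have := h z
      have := hrow z
      linarith [h z, hrow z]
    · intro z _ k hk
      exact absurd (Finset.mem_univ k) hk
  · set Z : Finset (Fin n) :=
      Finset.univ.filter (fun k => ∃ y ∈ Y, Relation.ReflTransGen (fun a b => 0 < P a b) y k)
      with hZdef
    apply aux_closed_stochastic_eigen P Z
    · obtain ⟨y, hy⟩ := hYne
      exact ⟨y, by simp [hZdef]; exact ⟨y, hy, Relation.ReflTransGen.refl⟩⟩
    · intro z hz
      simp only [hZdef, Finset.mem_filter, Finset.mem_univ, true_and] at hz
      obtain ⟨y, hy, hpath⟩ := hz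
      have := hY y hy z hpath
      linarith [hrow z]
    · intro z hz k hk
      simp only [hZdef, Finset.mem_filter, Finset.mem_univ, true_and] at hz hk
      obtain ⟨y, hy, hpath⟩ := hz
      by_contra hne
      have hpos : 0 < P z k := lt_of_le_of_ne (hP z k) (Ne.symm hne)
      exact hk ⟨y, hy, hpath.tail hpos⟩
end

section
/- The choice share map B ↦ π_j^w(B) in the brand ambassador problem is monotone: for X ⊆ Y ⊆ A, π_j^w(X) ≤ π_j^w(Y). -/
open Matrix

/-- `P(B)`: the rows of `P` indexed by the brand-ambassador set `B` are zeroed. -/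
def ambP {n : ℕ} (P : Matrix (Fin n) (Fin n) ℝ) (B : Finset (Fin n)) :
    Matrix (Fin n) (Fin n) ℝ :=
  fun i k => if i ∈ B then 0 else P i k

/-- `q⁽ʲ⁾(B)`: entries indexed by `B` are set to 1 (ambassadors pick `j` surely). -/
def ambQ {n m : ℕ} (q : Fin n → Fin m → ℝ) (j : Fin m) (B : Finset (Fin n)) :
    Fin n → ℝ :=
  fun k => if k ∈ B then 1 else q k j

/-- Choice share of `j` under endowment `w` with ambassador set `B`. -/
noncomputable def ambShare {n m : ℕ} (w : Fin n → ℝ) (P : Matrix (Fin n) (Fin n) ℝ)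
    (q : Fin n → Fin m → ℝ) (j : Fin m) (B : Finset (Fin n)) : ℝ :=
  w ⬝ᵥ ((1 - ambP P B)⁻¹ *ᵥ ambQ q j B)

/-! Write `x_B = (I - P(B))⁻¹ q⁽ʲ⁾(B)`. Since `0 ≤ P(B) ≤ P` entrywise and `P` has spectral
radius `< 1`, the powers of `P(B)` tend to zero, so `I - P(B)` is inverse-positive:
`(I - P(B)) v ≥ 0` forces `v ≥ 0` (from `P(B) v ≤ v` one gets `P(B)ᵏ v ≤ v`, and the left side
tends to `0`). Applied to `1 - x_X` this gives `x_X ≤ 1`, because the rows of `(P(X), q⁽ʲ⁾(X))`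
sum to at most `1`. Applied to `x_Y - x_X`, whose image under `I - P(Y)` is `1 - x_X` on `Y` and
`0` off `Y`, it gives `x_X ≤ x_Y`; pairing with `w ≥ 0` finishes. -/

open Filter Topology

theorem tendsto_pow_atTop_nhds_zero_of_forall_spectrum_norm_lt_one {A : Type*} [NormedRing A]
    [NormedAlgebra ℂ A] [CompleteSpace A] {a : A} (ha : ∀ z ∈ spectrum ℂ a, ‖z‖ < 1) :
    Tendsto (a ^ ·) atTop (𝓝 0) := by
  have hρ : spectralRadius ℂ a < 1 := by
    rcases (spectrum ℂ a).eq_empty_or_nonempty with h | h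
    · simp [spectralRadius, h]
    · simpa using spectrum.spectralRadius_lt_of_forall_lt_of_nonempty h (r := 1)
        fun z hz => by simpa [← NNReal.coe_lt_coe] using ha z hz
  obtain ⟨r, hρr, hr1⟩ := ENNReal.lt_iff_exists_nnreal_btwn.1 hρ
  have hle : ∀ᶠ k : ℕ in atTop, ‖a ^ k‖ ≤ (r : ℝ) ^ k := by
    have hgelfand := spectrum.pow_nnnorm_pow_one_div_tendsto_nhds_spectralRadius a
    filter_upwards [hgelfand.eventually_lt_const hρr, eventually_ne_atTop 0] with k hk hk0
    rw [one_div, ENNReal.rpow_inv_lt_iff (by positivity), ENNReal.rpow_natCast] at hk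
    exact_mod_cast hk.le
  exact squeeze_zero_norm' hle
    (tendsto_pow_atTop_nhds_zero_of_lt_one r.coe_nonneg (by exact_mod_cast hr1))

namespace Matrix

variable {ι : Type*} [Fintype ι]

theorem mulVec_mono_of_nonneg {κ α : Type*} [Semiring α] [PartialOrder α] [IsOrderedRing α]
    {A : Matrix κ ι α} (hA : ∀ i l, 0 ≤ A i l) {u v : ι → α} (huv : u ≤ v) :
    A *ᵥ u ≤ A *ᵥ v :=
  fun i => Finset.sum_le_sum fun l _ => mul_le_mul_of_nonneg_left (huv l) (hA i l)

variable [DecidableEq ι]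

theorem tendsto_pow_atTop_nhds_zero_of_forall_spectrum_norm_lt_one {A : Matrix ι ι ℝ}
    (hA : ∀ z ∈ spectrum ℂ (A.map (algebraMap ℝ ℂ)), ‖z‖ < 1) :
    Tendsto (A ^ ·) atTop (𝓝 0) := by
  let _ : NormedRing (Matrix ι ι ℂ) := Matrix.linftyOpNormedRing
  let _ : NormedAlgebra ℂ (Matrix ι ι ℂ) := Matrix.linftyOpNormedAlgebra
  have hC := _root_.tendsto_pow_atTop_nhds_zero_of_forall_spectrum_norm_lt_one hA
  have hre : Continuous fun M : Matrix ι ι ℂ => M.map Complex.re :=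
    continuous_id.matrix_map Complex.continuous_re
  convert (hre.tendsto 0).comp hC using 1
  · ext k : 1
    have hmap : A.map Complex.ofReal ^ k = (A ^ k).map Complex.ofReal :=
      (map_pow Complex.ofRealHom.mapMatrix A k).symm
    ext i l
    simp [hmap]
  · simp

theorem pow_apply_le_pow_apply {α : Type*} [Semiring α] [PartialOrder α] [IsOrderedRing α]
    {A B : Matrix ι ι α} (hA : ∀ i l, 0 ≤ A i l) (hAB : ∀ i l, A i l ≤ B i l) (k : ℕ) :
    ∀ i l, (A ^ k) i l ≤ (B ^ k) i l := by
  have hB : ∀ i l, 0 ≤ B i l := fun i l => (hA i l).trans (hAB i l)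
  induction k with
  | zero => exact fun _ _ => le_rfl
  | succ k ih =>
    intro i l
    rw [pow_succ, pow_succ, mul_apply, mul_apply]
    exact Finset.sum_le_sum fun t _ =>
      mul_le_mul (ih i t) (hAB t l) (hA t l) (pow_apply_nonneg hB k i t)

theorem tendsto_pow_atTop_nhds_zero_of_le {A B : Matrix ι ι ℝ} (hA : ∀ i l, 0 ≤ A i l)
    (hAB : ∀ i l, A i l ≤ B i l) (hB : Tendsto (B ^ ·) atTop (𝓝 0)) :
    Tendsto (A ^ ·) atTop (𝓝 0) := by
  refine tendsto_pi_nhds.2 fun i => tendsto_pi_nhds.2 fun l => ?_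
  exact squeeze_zero (fun k => pow_apply_nonneg hA k i l)
    (fun k => pow_apply_le_pow_apply hA hAB k i l)
    (tendsto_pi_nhds.1 (tendsto_pi_nhds.1 hB i) l)

variable {M : Matrix ι ι ℝ}

theorem nonneg_of_one_sub_mulVec_nonneg (hM : ∀ i l, 0 ≤ M i l)
    (hlim : Tendsto (M ^ ·) atTop (𝓝 0)) {v : ι → ℝ} (hv : 0 ≤ (1 - M) *ᵥ v) : 0 ≤ v := by
  have hMv : M *ᵥ v ≤ v := by simpa [sub_mulVec] using hv
  have hpow : ∀ k : ℕ, (M ^ k) *ᵥ v ≤ v := by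
    intro k
    induction k with
    | zero => simp
    | succ k ih =>
      calc (M ^ (k + 1)) *ᵥ v = (M ^ k) *ᵥ (M *ᵥ v) := by rw [pow_succ, mulVec_mulVec]
        _ ≤ (M ^ k) *ᵥ v := mulVec_mono_of_nonneg (pow_apply_nonneg hM k) hMv
        _ ≤ v := ih
  have hvec : Tendsto (fun k : ℕ => (M ^ k) *ᵥ v) atTop (𝓝 0) := by
    simpa [Function.comp_def] using
      ((continuous_id.matrix_mulVec continuous_const).tendsto 0).comp hlim
  exact le_of_tendsto' hvec hpow

theorem isUnit_one_sub_of_nonneg (hM : ∀ i l, 0 ≤ M i l)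
    (hlim : Tendsto (M ^ ·) atTop (𝓝 0)) : IsUnit (1 - M) := by
  refine mulVec_injective_iff_isUnit.1 fun u v huv => ?_
  have h₁ : 0 ≤ u - v :=
    nonneg_of_one_sub_mulVec_nonneg hM hlim (by rw [mulVec_sub, huv, sub_self])
  have h₂ : 0 ≤ v - u :=
    nonneg_of_one_sub_mulVec_nonneg hM hlim (by rw [mulVec_sub, huv, sub_self])
  exact le_antisymm (sub_nonneg.1 h₂) (sub_nonneg.1 h₁)

end Matrix

section Ambassador

variable {n m : ℕ} {P : Matrix (Fin n) (Fin n) ℝ}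

/-- Entry `i` is the probability that agent `i` eventually chooses `j`. -/
noncomputable def ambChoiceProb (P : Matrix (Fin n) (Fin n) ℝ) (q : Fin n → Fin m → ℝ)
    (j : Fin m) (B : Finset (Fin n)) : Fin n → ℝ :=
  (1 - ambP P B)⁻¹ *ᵥ ambQ q j B

theorem ambP_nonneg (hP : ∀ i k, 0 ≤ P i k) (B : Finset (Fin n)) (i k : Fin n) :
    0 ≤ ambP P B i k := by
  unfold ambP; split_ifs <;> simp [hP]

theorem ambP_le (hP : ∀ i k, 0 ≤ P i k) (B : Finset (Fin n)) (i k : Fin n) :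
    ambP P B i k ≤ P i k := by
  unfold ambP; split_ifs <;> simp [hP]

theorem one_sub_ambP_mulVec_apply (B : Finset (Fin n)) (v : Fin n → ℝ) (i : Fin n) :
    ((1 - ambP P B) *ᵥ v) i = if i ∈ B then v i else v i - (P *ᵥ v) i := by
  simp only [sub_mulVec, one_mulVec, Pi.sub_apply]
  split_ifs with hi <;> simp [mulVec, dotProduct, ambP, hi]

variable (hP : ∀ i k, 0 ≤ P i k)
  (hspec : ∀ μ ∈ spectrum ℂ (P.map (algebraMap ℝ ℂ)), ‖μ‖ < 1)
include hP hspec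

theorem tendsto_ambP_pow (B : Finset (Fin n)) : Tendsto (ambP P B ^ ·) atTop (𝓝 0) :=
  tendsto_pow_atTop_nhds_zero_of_le (ambP_nonneg hP B) (ambP_le hP B)
    (Matrix.tendsto_pow_atTop_nhds_zero_of_forall_spectrum_norm_lt_one hspec)

theorem nonneg_of_one_sub_ambP_mulVec_nonneg {B : Finset (Fin n)} {v : Fin n → ℝ}
    (hv : 0 ≤ (1 - ambP P B) *ᵥ v) : 0 ≤ v :=
  nonneg_of_one_sub_mulVec_nonneg (ambP_nonneg hP B) (tendsto_ambP_pow hP hspec B) hv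

theorem one_sub_ambP_mulVec_ambChoiceProb (q : Fin n → Fin m → ℝ) (j : Fin m)
    (B : Finset (Fin n)) : (1 - ambP P B) *ᵥ ambChoiceProb P q j B = ambQ q j B := by
  have hunit := isUnit_one_sub_of_nonneg (ambP_nonneg hP B) (tendsto_ambP_pow hP hspec B)
  rw [ambChoiceProb, mulVec_mulVec, mul_nonsing_inv _ ((isUnit_iff_isUnit_det _).1 hunit),
    one_mulVec]

variable {q : Fin n → Fin m → ℝ} (hq : ∀ i l, 0 ≤ q i l)
  (hrow : ∀ i, (∑ k, P i k) + (∑ l, q i l) = 1)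
include hq hrow

theorem ambChoiceProb_le_one (j : Fin m) (B : Finset (Fin n)) : ambChoiceProb P q j B ≤ 1 := by
  refine sub_nonneg.1 (nonneg_of_one_sub_ambP_mulVec_nonneg (B := B) hP hspec fun i => ?_)
  rw [mulVec_sub, one_sub_ambP_mulVec_ambChoiceProb hP hspec, Pi.sub_apply,
    one_sub_ambP_mulVec_apply, ambQ]
  split_ifs with hi
  · simp
  · have hqj : q i j ≤ ∑ l, q i l := Finset.single_le_sum (fun l _ => hq i l) (Finset.mem_univ j)
    have hP1 : (P *ᵥ 1) i = ∑ k, P i k := by simp [mulVec, dotProduct]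
    simp only [Pi.zero_apply, Pi.one_apply, hP1]
    linarith [hrow i]

theorem ambChoiceProb_mono (j : Fin m) {X Y : Finset (Fin n)} (hXY : X ⊆ Y) :
    ambChoiceProb P q j X ≤ ambChoiceProb P q j Y := by
  refine sub_nonneg.1 (nonneg_of_one_sub_ambP_mulVec_nonneg (B := Y) hP hspec fun i => ?_)
  rw [mulVec_sub, one_sub_ambP_mulVec_ambChoiceProb hP hspec, Pi.sub_apply, Pi.zero_apply,
    one_sub_ambP_mulVec_apply]
  by_cases hiY : i ∈ Y
  · simpa [ambQ, hiY] using ambChoiceProb_le_one hP hspec hq hrow j X i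
  · have hiX : i ∉ X := fun h => hiY (hXY h)
    have hX := congrFun (one_sub_ambP_mulVec_ambChoiceProb hP hspec q j X) i
    simp only [one_sub_ambP_mulVec_apply, ambQ, hiX, hiY, if_false] at hX ⊢
    linarith

end Ambassador

theorem ambassador_share_monotone_general {n m : ℕ}
    (P : Matrix (Fin n) (Fin n) ℝ) (q : Fin n → Fin m → ℝ) (j : Fin m)
    (w : Fin n → ℝ)
    (hP : ∀ i k, 0 ≤ P i k)
    (hq : ∀ i l, 0 ≤ q i l)
    (hrow : ∀ i, (∑ k, P i k) + (∑ l, q i l) = 1)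
    (hspec : ∀ μ ∈ spectrum ℂ (P.map (algebraMap ℝ ℂ)), ‖μ‖ < 1)
    (hw : ∀ i, 0 ≤ w i)
    (X Y : Finset (Fin n)) (hXY : X ⊆ Y) :
    ambShare w P q j X ≤ ambShare w P q j Y :=
  dotProduct_le_dotProduct_of_nonneg_left (ambChoiceProb_mono hP hspec hq hrow j hXY) hw

/-- The choice share `B ↦ π_j^w(B)` of the brand ambassador
problem is monotone: `X ⊆ Y → π_j^w(X) ≤ π_j^w(Y)`. -/
theorem ambassador_share_monotone {n m : ℕ}
    (P : Matrix (Fin n) (Fin n) ℝ) (q : Fin n → Fin m → ℝ) (j : Fin m)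
    (w : Fin n → ℝ)
    (hP : ∀ i k, 0 ≤ P i k) (hdiag : ∀ i, P i i = 0)
    (hq : ∀ i l, 0 ≤ q i l)
    (hrow : ∀ i, (∑ k, P i k) + (∑ l, q i l) = 1)
    (hspec : ∀ μ ∈ spectrum ℂ (P.map (algebraMap ℝ ℂ)), ‖μ‖ < 1)
    (hw : ∀ i, 0 ≤ w i)
    (X Y : Finset (Fin n)) (hXY : X ⊆ Y) :
    ambShare w P q j X ≤ ambShare w P q j Y :=
  ambassador_share_monotone_general P q j w hP hq hrow hspec hw X Y hXY
end

section
/- Greedy (1 - 1/e) approximation: if f : 2^Ω → R is nonnegative, monotone, and submodular with f(∅)=0, and S_K is produced by the greedy algorithm that at each of K steps adds the element maximizing the increment of f, then f(S_K) ≥ (1 - 1/e) · max{f(S) : S ⊆ Ω, |S| ≤ K}. -/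
/-- Submodular telescoping: `f (X ∪ T) ≤ f X + Σ_{x ∈ T \ X} (f (insert x X) - f X)`. -/
lemma submod_telescope {α : Type*} [DecidableEq α] (f : Finset α → ℝ)
    (hsubmod : ∀ X Y : Finset α, X ⊆ Y → ∀ x ∉ Y,
      f (insert x Y) - f Y ≤ f (insert x X) - f X) :
    ∀ (T X : Finset α), f (X ∪ T) ≤ f X + ∑ x ∈ T \ X, (f (insert x X) - f X) := by
  intro T
  induction T using Finset.induction_on with
  | empty => intro X; simp
  | @insert a T' ha ih =>
    intro X
    by_cases haX : a ∈ X
    · have h1 : X ∪ insert a T' = X ∪ T' := by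
        ext x; simp only [Finset.mem_union, Finset.mem_insert]
        constructor
        · rintro (h | rfl | h) <;> [exact Or.inl h; exact Or.inl haX; exact Or.inr h]
        · rintro (h | h) <;> [exact Or.inl h; exact Or.inr (Or.inr h)]
      have h2 : insert a T' \ X = T' \ X := by
        ext x; simp only [Finset.mem_sdiff, Finset.mem_insert]
        constructor
        · rintro ⟨h | h, hx⟩
          · exact absurd haX (h ▸ hx)
          · exact ⟨h, hx⟩
        · rintro ⟨h, hx⟩; exact ⟨Or.inr h, hx⟩
      rw [h1, h2]; exact ih X
    · have h1 : X ∪ insert a T' = insert a (X ∪ T') := by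
        ext x; simp [Finset.mem_union, Finset.mem_insert]
      have h2 : insert a T' \ X = insert a (T' \ X) := by
        ext x; simp only [Finset.mem_sdiff, Finset.mem_insert]
        constructor
        · rintro ⟨h | h, hx⟩
          · exact Or.inl h
          · exact Or.inr ⟨h, hx⟩
        · rintro (rfl | ⟨h, hx⟩)
          · exact ⟨Or.inl rfl, haX⟩
          · exact ⟨Or.inr h, hx⟩
      have haT : a ∉ T' \ X := fun h => ha (Finset.mem_sdiff.mp h).1
      rw [h1, h2, Finset.sum_insert haT]
      have haXT : a ∉ X ∪ T' := by
        simp only [Finset.mem_union]; rintro (h | h) <;> [exact haX h; exact ha h]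
      have hsub := hsubmod X (X ∪ T') Finset.subset_union_left a haXT
      have := ih X
      linarith

/-- Nemhauser–Wolsey–Fisher: if `f` is a nonnegative, monotone,
submodular set function on a finite ground set with `f ∅ = 0`, and `S : ℕ → Finset α`
is a run of the greedy algorithm for `K` steps (each step adds an element
maximizing the increment), then `f (S K) ≥ (1 - 1/e) max {f T : |T| ≤ K}`. -/
theorem greedy_submodular_approximation {α : Type*} [Fintype α] [DecidableEq α]
    (f : Finset α → ℝ) (K : ℕ)
    (hnonneg : ∀ T, 0 ≤ f T)
    (hmono : ∀ X Y : Finset α, X ⊆ Y → f X ≤ f Y)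
    (hsubmod : ∀ X Y : Finset α, X ⊆ Y → ∀ x ∉ Y,
      f (insert x Y) - f Y ≤ f (insert x X) - f X)
    (hempty : f ∅ = 0)
    (S : ℕ → Finset α) (hS0 : S 0 = ∅)
    (hgreedy : ∀ i < K, ∃ a ∉ S i, S (i + 1) = insert a (S i) ∧
      ∀ b, f (insert b (S i)) ≤ f (insert a (S i))) :
    ∀ T : Finset α, T.card ≤ K → (1 - 1 / Real.exp 1) * f T ≤ f (S K) := by
  intro T hT
  rcases Nat.eq_zero_or_pos K with hK | hKpos
  · subst hK
    have hTe : T = ∅ := Finset.card_eq_zero.mp (Nat.le_zero.mp hT)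
    rw [hTe, hempty, hS0, hempty, mul_zero]
  · have hK1 : (1:ℝ) ≤ (K:ℝ) := by exact_mod_cast hKpos
    have hKpos' : (0:ℝ) < (K:ℝ) := by linarith
    set r : ℝ := 1 - 1 / (K:ℝ) with hr
    have hr0 : 0 ≤ r := by
      rw [hr]
      have : 1 / (K:ℝ) ≤ 1 := by
        rw [div_le_one hKpos']; exact hK1
      linarith
    have step : ∀ i < K, f T - f (S (i+1)) ≤ r * (f T - f (S i)) := by
      intro i hi
      obtain ⟨a, ha, hSi1, hmax⟩ := hgreedy i hi
      have hδ0 : 0 ≤ f (S (i+1)) - f (S i) := by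
        have := hmono (S i) (S (i+1)) (by rw [hSi1]; exact Finset.subset_insert _ _)
        linarith
      have htel := submod_telescope f hsubmod T (S i)
      have hbound : ∀ x ∈ T \ S i,
          f (insert x (S i)) - f (S i) ≤ f (S (i+1)) - f (S i) := by
        intro x _
        have := hmax x
        rw [hSi1]; linarith
      have hsum : ∑ x ∈ T \ S i, (f (insert x (S i)) - f (S i))
          ≤ ((T \ S i).card : ℝ) * (f (S (i+1)) - f (S i)) := by
        calc ∑ x ∈ T \ S i, (f (insert x (S i)) - f (S i))
            ≤ ∑ _x ∈ T \ S i, (f (S (i+1)) - f (S i)) := Finset.sum_le_sum hbound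
          _ = ((T \ S i).card : ℝ) * (f (S (i+1)) - f (S i)) := by
              rw [Finset.sum_const, nsmul_eq_mul]
      have hcard : ((T \ S i).card : ℝ) ≤ (K:ℝ) := by
        have h1 : (T \ S i).card ≤ T.card := Finset.card_le_card Finset.sdiff_subset
        exact_mod_cast le_trans h1 hT
      have hfT : f T ≤ f (S i ∪ T) := hmono _ _ Finset.subset_union_right
      have h1 : f T ≤ f (S i) + (K:ℝ) * (f (S (i+1)) - f (S i)) := by
        have h2 := mul_le_mul_of_nonneg_right hcard hδ0
        linarith
      have hreq : r = ((K:ℝ) - 1) / (K:ℝ) := by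
        rw [hr]; field_simp
      rw [hreq, div_mul_eq_mul_div, le_div_iff₀ hKpos']
      nlinarith [h1]
    have main : ∀ i ≤ K, f T - f (S i) ≤ r ^ i * f T := by
      intro i
      induction i with
      | zero => intro _; rw [hS0, hempty, pow_zero, one_mul]; linarith
      | succ n ih =>
        intro hn
        have hnK : n < K := Nat.lt_of_succ_le hn
        have h1 := step n hnK
        have h2 := ih (le_of_lt hnK)
        have h3 := mul_le_mul_of_nonneg_left h2 hr0
        rw [pow_succ]
        calc f T - f (S (n+1)) ≤ r * (f T - f (S n)) := h1
          _ ≤ r * (r ^ n * f T) := h3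
          _ = r ^ n * r * f T := by ring
    have hrK : r ^ K ≤ Real.exp (-1) := by
      have h1 : r ≤ Real.exp (-(1/(K:ℝ))) := by
        have := Real.add_one_le_exp (-(1/(K:ℝ)))
        rw [hr]; linarith
      have h2 : r ^ K ≤ (Real.exp (-(1/(K:ℝ)))) ^ K := pow_le_pow_left₀ hr0 h1 K
      have h3 : (Real.exp (-(1/(K:ℝ)))) ^ K = Real.exp ((K:ℝ) * (-(1/(K:ℝ)))) := by
        rw [← Real.exp_nat_mul]
      have h4 : (K:ℝ) * (-(1/(K:ℝ))) = -1 := by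
        field_simp
      rw [h3, h4] at h2
      exact h2
    have hfin := main K le_rfl
    have h5 : r ^ K * f T ≤ Real.exp (-1) * f T :=
      mul_le_mul_of_nonneg_right hrK (hnonneg T)
    have h6 : Real.exp (-1) = 1 / Real.exp 1 := by
      rw [Real.exp_neg]; ring
    rw [h6] at h5
    linarith
end

section
/- Monotonicity of choice share in a parameter: suppose on an interval T, P(u) is nonnegative with spectral radius < 1 and Σ_k p_{ik}(u) + Σ_l q_{il}(u) = 1 for each i; if q_{ij}(·) is differentiable increasing, and p_{ik}(·) (all k) and q_{il}(·) (all l ≠ j) are differentiable decreasing, then u ↦ π_j^w(u) = w^T (I - P(u))^{-1} q^{(j)}(u) is increasing on T, and for each l ≠ j, u ↦ π_l^w(u) is decreasing on T, for any w ≥ 0. -/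
/-!
Because the spectrum of `P` lies in the open unit disc, Gelfand's formula makes the Neumann series
`∑ Pᴺ` converge, so `(1 - P)⁻¹ = ∑ Pᴺ` is entrywise nonnegative and entrywise monotone in the
nonnegative matrix `P`. Hence for `l ≠ j` the share `π_l = wᵀ (1 - P)⁻¹ q⁽ˡ⁾` is built from
nonnegative, decreasing quantities by sums and products, and decreases. The row sums say
`(1 - P) 𝟙 = ∑ₗ q⁽ˡ⁾`, so `∑ₗ π_l = wᵀ 𝟙` does not depend on `u`, and `π_j` must increase.
-/

open Matrix Filter

theorem summable_pow_of_forall_norm_spectrum_lt_one {A : Type*} [NormedRing A]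
    [NormedAlgebra ℂ A] [CompleteSpace A] {a : A} (h : ∀ z ∈ spectrum ℂ a, ‖z‖ < 1) :
    Summable (a ^ ·) := by
  nontriviality A
  have hρ : spectralRadius ℂ a < 1 := by
    simpa using spectrum.spectralRadius_lt_of_forall_lt a (r := 1) fun z hz => by
      exact_mod_cast h z hz
  obtain ⟨r, hρr, hr1⟩ := ENNReal.lt_iff_exists_nnreal_btwn.mp hρ
  have hbound : ∀ᶠ N : ℕ in atTop, ‖a ^ N‖ ≤ (r : ℝ) ^ N := by
    filter_upwards [(spectrum.gelfand_formula a).eventually_lt_const hρr,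
      eventually_gt_atTop 0] with N hN hN0
    rw [one_div, ENNReal.rpow_inv_lt_iff (by positivity), ENNReal.rpow_natCast] at hN
    exact_mod_cast hN.le
  exact .of_norm_bounded_eventually_nat
    (summable_geometric_of_lt_one r.coe_nonneg (by exact_mod_cast hr1)) hbound

namespace Matrix

variable {ι : Type*} [Fintype ι]

section OrderedSemiring

variable {m R : Type*} [Semiring R] [PartialOrder R] [IsOrderedRing R]

theorem mulVec_le_mulVec {M M' : Matrix m ι R} {v v' : ι → R} (hM : ∀ i k, 0 ≤ M i k)
    (hMM' : ∀ i k, M i k ≤ M' i k) (hv : 0 ≤ v) (hvv' : v ≤ v') : M *ᵥ v ≤ M' *ᵥ v' := fun i =>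
  Finset.sum_le_sum fun k _ => mul_le_mul (hMM' i k) (hvv' k) (hv k) ((hM i k).trans (hMM' i k))

theorem pow_apply_le_pow_apply_s14 [DecidableEq ι] {A A' : Matrix ι ι R} (hA : ∀ i k, 0 ≤ A i k)
    (hAA' : ∀ i k, A i k ≤ A' i k) (N : ℕ) (i k : ι) : (A ^ N) i k ≤ (A' ^ N) i k := by
  induction N generalizing k with
  | zero => rfl
  | succ N ih =>
    simp only [pow_succ, mul_apply]
    exact Finset.sum_le_sum fun l _ =>
      mul_le_mul (ih l) (hAA' l k) (hA l k) ((pow_apply_nonneg hA N i l).trans (ih l))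

end OrderedSemiring

variable [DecidableEq ι]

theorem summable_pow_of_forall_norm_spectrum_map_lt_one {A : Matrix ι ι ℝ}
    (h : ∀ μ ∈ spectrum ℂ (A.map (algebraMap ℝ ℂ)), ‖μ‖ < 1) : Summable (A ^ ·) := by
  -- Gelfand's formula needs some Banach-algebra norm on complex matrices; any one will do.
  let := Matrix.linftyOpNormedRing (n := ι) (α := ℂ)
  let := Matrix.linftyOpNormedAlgebra (n := ι) (R := ℂ) (α := ℂ)
  have hpow (N : ℕ) : A.map (algebraMap ℝ ℂ) ^ N = (A ^ N).map (algebraMap ℝ ℂ) :=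
    (map_pow (algebraMap ℝ ℂ).mapMatrix A N).symm
  have hB := summable_pow_of_forall_norm_spectrum_lt_one h
  simp only [hpow] at hB
  refine Pi.summable.mpr fun i => Pi.summable.mpr fun k => ?_
  exact Complex.summable_ofReal.mp (Pi.summable.mp (Pi.summable.mp hB i) k)

theorem isUnit_det_one_sub_of_summable_pow {A : Matrix ι ι ℝ} (h : Summable (A ^ ·)) :
    IsUnit (1 - A).det :=
  isUnit_det_of_right_inverse h.one_sub_mul_tsum_pow

theorem hasSum_pow_apply_inv_one_sub {A : Matrix ι ι ℝ} (h : Summable (A ^ ·)) (i k : ι) :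
    HasSum (fun N => (A ^ N) i k) ((1 - A)⁻¹ i k) := by
  rw [inv_eq_right_inv h.one_sub_mul_tsum_pow]
  exact Pi.hasSum.mp (Pi.hasSum.mp h.hasSum i) k

theorem inv_one_sub_apply_nonneg {A : Matrix ι ι ℝ} (hA : ∀ i k, 0 ≤ A i k)
    (h : Summable (A ^ ·)) (i k : ι) : 0 ≤ (1 - A)⁻¹ i k :=
  (hasSum_pow_apply_inv_one_sub h i k).nonneg fun N => pow_apply_nonneg hA N i k

theorem inv_one_sub_apply_le {A A' : Matrix ι ι ℝ} (hA : ∀ i k, 0 ≤ A i k)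
    (hAA' : ∀ i k, A i k ≤ A' i k) (h : Summable (A ^ ·)) (h' : Summable (A' ^ ·)) (i k : ι) :
    (1 - A)⁻¹ i k ≤ (1 - A')⁻¹ i k :=
  hasSum_le (fun N => pow_apply_le_pow_apply_s14 hA hAA' N i k)
    (hasSum_pow_apply_inv_one_sub h i k) (hasSum_pow_apply_inv_one_sub h' i k)

end Matrix

theorem le_of_sum_eq_of_forall_ne_le {κ M : Type*} [Fintype κ] [AddCommGroup M] [PartialOrder M]
    [IsOrderedAddMonoid M] {f g : κ → M} (hfg : ∑ l, f l = ∑ l, g l) (j : κ)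
    (h : ∀ l ≠ j, g l ≤ f l) : f j ≤ g j := by
  classical
  rw [← Finset.add_sum_erase _ _ (Finset.mem_univ j),
    ← Finset.add_sum_erase _ _ (Finset.mem_univ j)] at hfg
  have hrest : ∑ l ∈ Finset.univ.erase j, g l ≤ ∑ l ∈ Finset.univ.erase j, f l :=
    Finset.sum_le_sum fun l hl => h l (Finset.ne_of_mem_erase hl)
  exact le_of_add_le_add_right (hfg.trans_le (add_le_add_right hrest _))

section ChoiceShare

variable {ι κ : Type*} [Fintype ι] [DecidableEq ι]

noncomputable def choiceShare (P : Matrix ι ι ℝ) (q : ι → κ → ℝ) (w : ι → ℝ) (l : κ) : ℝ :=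
  w ⬝ᵥ ((1 - P)⁻¹ *ᵥ fun i => q i l)

theorem sum_choiceShare [Fintype κ] {P : Matrix ι ι ℝ} {q : ι → κ → ℝ} (w : ι → ℝ)
    (hP : IsUnit (1 - P).det) (hrow : ∀ i, ∑ k, P i k + ∑ l, q i l = 1) :
    ∑ l, choiceShare P q w l = ∑ i, w i := by
  have hq : ∑ l, (fun i => q i l) = (1 - P) *ᵥ 1 := by
    ext i
    rw [Finset.sum_apply, sub_mulVec, one_mulVec, Pi.sub_apply, Pi.one_apply, ← hrow i]
    simp [mulVec, dotProduct]
  simp only [choiceShare, ← dotProduct_sum, ← mulVec_sum]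
  rw [hq, mulVec_mulVec, nonsing_inv_mul _ hP, one_mulVec, dotProduct_one]

theorem choiceShare_le_choiceShare {P P' : Matrix ι ι ℝ} {q q' : ι → κ → ℝ} {w : ι → ℝ} {l : κ}
    (hw : 0 ≤ w) (hP : ∀ i k, 0 ≤ P i k) (hPP' : ∀ i k, P i k ≤ P' i k)
    (h : Summable (P ^ ·)) (h' : Summable (P' ^ ·)) (hq : ∀ i, 0 ≤ q i l)
    (hqq' : ∀ i, q i l ≤ q' i l) : choiceShare P q w l ≤ choiceShare P' q' w l :=
  dotProduct_le_dotProduct_of_nonneg_left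
    (Matrix.mulVec_le_mulVec (Matrix.inv_one_sub_apply_nonneg hP h)
      (Matrix.inv_one_sub_apply_le hP hPP' h h') hq hqq') hw

end ChoiceShare

theorem choice_share_monotone_in_parameter_general {n m : ℕ}
    (P : ℝ → Matrix (Fin n) (Fin n) ℝ) (q : ℝ → Fin n → Fin m → ℝ)
    (j : Fin m) (w : Fin n → ℝ) (hw : ∀ i, 0 ≤ w i)
    (T : Set ℝ)
    (hPnonneg : ∀ u ∈ T, ∀ i k, 0 ≤ P u i k)
    (hqnonneg : ∀ u ∈ T, ∀ i l, 0 ≤ q u i l)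
    (hrow : ∀ u ∈ T, ∀ i, (∑ k, P u i k) + (∑ l, q u i l) = 1)
    (hspec : ∀ u ∈ T, ∀ μ ∈ spectrum ℂ ((P u).map (algebraMap ℝ ℂ)), ‖μ‖ < 1)
    (hp_anti : ∀ i k, AntitoneOn (fun u => P u i k) T)
    (hql_anti : ∀ i, ∀ l ≠ j, AntitoneOn (fun u => q u i l) T) :
    MonotoneOn (fun u => w ⬝ᵥ ((1 - P u)⁻¹ *ᵥ fun i => q u i j)) T ∧
      ∀ l ≠ j, AntitoneOn (fun u => w ⬝ᵥ ((1 - P u)⁻¹ *ᵥ fun i => q u i l)) T := by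
  have hsum (u : ℝ) (hu : u ∈ T) : Summable (P u ^ ·) :=
    summable_pow_of_forall_norm_spectrum_map_lt_one (hspec u hu)
  have hanti (l : Fin m) (hl : l ≠ j) : AntitoneOn (fun u => choiceShare (P u) (q u) w l) T :=
    fun u₁ h₁ u₂ h₂ hu => choiceShare_le_choiceShare hw (hPnonneg u₂ h₂)
      (fun i k => hp_anti i k h₁ h₂ hu) (hsum u₂ h₂) (hsum u₁ h₁) (fun i => hqnonneg u₂ h₂ i l)
      (fun i => hql_anti i l hl h₁ h₂ hu)
  have htotal (u : ℝ) (hu : u ∈ T) : ∑ l, choiceShare (P u) (q u) w l = ∑ i, w i :=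
    sum_choiceShare w (isUnit_det_one_sub_of_summable_pow (hsum u hu)) (hrow u hu)
  refine ⟨fun u₁ h₁ u₂ h₂ hu => ?_, hanti⟩
  exact le_of_sum_eq_of_forall_ne_le ((htotal u₁ h₁).trans (htotal u₂ h₂).symm) j
    fun l hl => hanti l hl h₁ h₂ hu

/-- Monotonicity of choice share in a parameter: on an interval
`T`, if `P u` is nonnegative with spectral radius < 1 and rows of `(P u, q u)`
sum to 1, `q · i j` is differentiable and increasing, and the `p · i k` and
`q · i l` (`l ≠ j`) are differentiable and decreasing, then
`u ↦ π_j^w(u) = wᵀ (I - P u)⁻¹ q⁽ʲ⁾(u)` is increasing on `T` and, for `l ≠ j`,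
`u ↦ π_l^w(u)` is decreasing on `T`, for any `w ≥ 0`. -/
theorem choice_share_monotone_in_parameter {n m : ℕ}
    (P : ℝ → Matrix (Fin n) (Fin n) ℝ) (q : ℝ → Fin n → Fin m → ℝ)
    (j : Fin m) (w : Fin n → ℝ) (hw : ∀ i, 0 ≤ w i)
    (T : Set ℝ) (hT : T.OrdConnected)
    (hPnonneg : ∀ u ∈ T, ∀ i k, 0 ≤ P u i k)
    (hqnonneg : ∀ u ∈ T, ∀ i l, 0 ≤ q u i l)
    (hrow : ∀ u ∈ T, ∀ i, (∑ k, P u i k) + (∑ l, q u i l) = 1)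
    (hspec : ∀ u ∈ T, ∀ μ ∈ spectrum ℂ ((P u).map (algebraMap ℝ ℂ)), ‖μ‖ < 1)
    (hqj_diff : ∀ i, DifferentiableOn ℝ (fun u => q u i j) T)
    (hqj_mono : ∀ i, MonotoneOn (fun u => q u i j) T)
    (hp_diff : ∀ i k, DifferentiableOn ℝ (fun u => P u i k) T)
    (hp_anti : ∀ i k, AntitoneOn (fun u => P u i k) T)
    (hql_diff : ∀ i, ∀ l ≠ j, DifferentiableOn ℝ (fun u => q u i l) T)
    (hql_anti : ∀ i, ∀ l ≠ j, AntitoneOn (fun u => q u i l) T) :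
    MonotoneOn (fun u => w ⬝ᵥ ((1 - P u)⁻¹ *ᵥ fun i => q u i j)) T ∧
      ∀ l ≠ j, AntitoneOn (fun u => w ⬝ᵥ ((1 - P u)⁻¹ *ᵥ fun i => q u i l)) T :=
  choice_share_monotone_in_parameter_general P q j w hw T hPnonneg hqnonneg hrow hspec hp_anti
    hql_anti
end
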